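/- Let L be a digit string admitting an infinite sequence of CVs. Then for every n ≥ 3, if all entries of the digit string CV_n(L) are equal, then CV_n(L) has length at most 5. -/

import Mathlib

/-!
The sum of `CV X` is the length of `X`, so two steps after a digit string the sum is at most `10`:
`(CV (CV X)).sum = X.foldr max 0 + 1`. On the other hand `J.sum = ∑ i, J.count i * i`, so if `CV J`
is a constant string of length `N`, its common value is positive and `J.sum ≥ 0 + 1 + ⋯ + (N - 1)`.
Applied to `J = CVseq L (n - 1)`, with `n ≥ 3`, this gives `N (N - 1) ≤ 20`, hence `N ≤ 5`.
-/

/-- A digit string is a nonempty finite list of natural numbers, each at most 9,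
read most-significant-first. -/
def DigitString (L : List ℕ) : Prop := L ≠ [] ∧ ∀ d ∈ L, d ≤ 9

/-- The curriculum vitae of `L`: the digit string of length `m + 1`, where `m` is the
largest entry of `L`, whose `i`-th entry (0-indexed) counts the occurrences of `i` in `L`. -/
def CV (L : List ℕ) : List ℕ :=
  (List.range (L.foldr max 0 + 1)).map (fun i => L.count i)

/-- The sequence of CVs of `L`: `CVseq L 0 = L` and `CVseq L (n+1) = CV (CVseq L n)`. -/
def CVseq (L : List ℕ) : ℕ → List ℕ
  | 0 => L
  | n + 1 => CV (CVseq L n)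

/-- `L` admits an infinite sequence of CVs: for every `n`, each value occurs at most
9 times in `CVseq L n` (so the next CV is defined). -/
def AdmitsCVs (L : List ℕ) : Prop := ∀ n, ∀ d, (CVseq L n).count d ≤ 9

/-- The complete life story of `L`: the digit string of length 10 whose `i`-th entry
(0-indexed, `0 ≤ i ≤ 9`) counts the occurrences of `i` in `L`. -/
def CLS (L : List ℕ) : List ℕ := (List.range 10).map (fun i => L.count i)

/-- The sequence of life stories of `L`. -/
def CLSseq (L : List ℕ) : ℕ → List ℕ
  | 0 => L
  | n + 1 => CLS (CLSseq L n)

/-- `L` admits an infinite sequence of life stories: for every `n`, each value occurs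
at most 9 times in `CLSseq L n`. -/
def AdmitsCLSs (L : List ℕ) : Prop := ∀ n, ∀ d, (CLSseq L n).count d ≤ 9

/-- The height of a digit string: the maximum of (its largest entry plus 1) and its length. -/
def height (L : List ℕ) : ℕ := max (L.foldr max 0 + 1) L.length

open Finset

lemma List.foldr_max_zero_mem {l : List ℕ} (hl : l ≠ []) : l.foldr max 0 ∈ l := by
  induction l with
  | nil => exact absurd rfl hl
  | cons b t ih =>
    rcases eq_or_ne t [] with rfl | ht
    · simp
    · rcases max_choice b (t.foldr max 0) with h | h <;> simp [h, ih ht]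

lemma List.sum_range_count_eq_length {l : List ℕ} {N : ℕ} (hl : ∀ a ∈ l, a < N) :
    ∑ i ∈ Finset.range N, l.count i = l.length := by
  simpa using Multiset.sum_count_eq_card (s := Finset.range N) (m := (l : Multiset ℕ))
    (by simpa using hl)

lemma List.sum_range_count_mul_eq_sum {l : List ℕ} {N : ℕ} (hl : ∀ a ∈ l, a < N) :
    ∑ i ∈ Finset.range N, l.count i * i = l.sum := by
  simpa using (Finset.sum_multiset_count_of_subset (l : Multiset ℕ) (Finset.range N)
    (by intro a; simpa using hl a)).symm

lemma length_CV (X : List ℕ) : (CV X).length = X.foldr max 0 + 1 := by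
  simp [CV]

lemma count_mem_CV {X : List ℕ} {i : ℕ} (hi : i < (CV X).length) : X.count i ∈ CV X :=
  List.mem_map.2 ⟨i, List.mem_range.2 (by rwa [length_CV] at hi), rfl⟩

lemma exists_count_eq_of_mem_CV {X : List ℕ} {d : ℕ} (hd : d ∈ CV X) : ∃ i, X.count i = d := by
  obtain ⟨i, -, rfl⟩ := List.mem_map.1 hd
  exact ⟨i, rfl⟩

lemma sum_CV (X : List ℕ) : (CV X).sum = X.length := by
  rw [CV, ← List.sum_range_count_eq_length fun a ha =>
    Nat.lt_succ_of_le (List.le_max_of_le' 0 ha le_rfl)]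
  simp [Finset.sum, Finset.range, Multiset.range]

lemma sum_CV_CV (X : List ℕ) : (CV (CV X)).sum = X.foldr max 0 + 1 := by
  rw [sum_CV, length_CV]

lemma forall_mem_CVseq_le_nine {L : List ℕ} (hL : DigitString L) (h : AdmitsCVs L) (k : ℕ) :
    ∀ d ∈ CVseq L k, d ≤ 9 := by
  cases k with
  | zero => exact hL.2
  | succ k =>
    intro d hd
    obtain ⟨i, rfl⟩ := exists_count_eq_of_mem_CV hd
    exact h k i

lemma sum_range_length_CV_le_sum {J : List ℕ} (hJ : ∀ a ∈ CV J, ∀ b ∈ CV J, a = b) :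
    ∑ i ∈ range (CV J).length, i ≤ J.sum := by
  rcases eq_or_ne J [] with rfl | hne
  · simp [CV]
  have hlt : ∀ a ∈ J, a < (CV J).length := fun a ha =>
    (length_CV J).symm ▸ Nat.lt_succ_of_le (List.le_max_of_le' 0 ha le_rfl)
  have hmax : J.foldr max 0 < (CV J).length := hlt _ (List.foldr_max_zero_mem hne)
  have hpos : ∀ i < (CV J).length, 1 ≤ J.count i := fun i hi => by
    rw [hJ _ (count_mem_CV hi) _ (count_mem_CV hmax)]
    exact List.count_pos_iff.2 (List.foldr_max_zero_mem hne)
  calc ∑ i ∈ range (CV J).length, i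
      ≤ ∑ i ∈ range (CV J).length, J.count i * i :=
        sum_le_sum fun i hi => Nat.le_mul_of_pos_left i (hpos i (mem_range.1 hi))
    _ = J.sum := List.sum_range_count_mul_eq_sum hlt

theorem cvseq_all_same_digits_length_le_five (L : List ℕ) (hL : DigitString L)
    (h : AdmitsCVs L) :
    ∀ n, 3 ≤ n → (∀ a ∈ CVseq L n, ∀ b ∈ CVseq L n, a = b) →
      (CVseq L n).length ≤ 5 := by
  intro n hn hconst
  obtain ⟨k, rfl⟩ : ∃ k, n = k + 3 := ⟨n - 3, by omega⟩
  have hsum : (CVseq L (k + 2)).sum ≤ 10 := by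
    have hmax : (CVseq L k).foldr max 0 ≤ 9 :=
      List.max_le_of_forall_le _ _ (forall_mem_CVseq_le_nine hL h k)
    rw [CVseq, CVseq, sum_CV_CV]
    omega
  have hbound : ∑ i ∈ range (CVseq L (k + 3)).length, i ≤ (CVseq L (k + 2)).sum :=
    sum_range_length_CV_le_sum hconst
  set N := (CVseq L (k + 3)).length
  have hN : N * (N - 1) ≤ 5 * 4 := by
    rw [← sum_range_id_mul_two]
    omega
  by_contra! h6
  have := Nat.mul_le_mul (h6 : 6 ≤ N) (Nat.sub_le_sub_right h6 1)
  omega
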